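/- arXiv:2412.01205 — 3 statements merged into one kernel-verified Lean document; each statement's English description precedes it below -/
import Mathlib

section
/- Let (Y,d) be a complete metric space, 𝔇 a neighborhood-closed collection of families of nonempty subsets of Y, and S a continuous non-autonomous dynamical system on Y. If S has a closed 𝔇-pullback absorbing set K ∈ 𝔇 and S is 𝔇-pullback asymptotically compact, then S has a unique 𝔇-pullback attractor A = {A(τ) : τ ∈ ℝ} ∈ 𝔇, and it is given for each τ ∈ ℝ by the ω-limit set A(τ) = ω(K,τ) = ⋂_{s≥0} closure(⋃_{t≥s} S(t,τ−t)(K(τ−t))). -/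
open Filter Topology

/-- A continuous non-autonomous dynamical system `S t τ : Y → Y` (for `t ≥ 0`, `τ ∈ ℝ`). -/
def IsNDS {Y : Type*} [MetricSpace Y] (S : ℝ → ℝ → Y → Y) : Prop :=
  (∀ τ : ℝ, S 0 τ = id) ∧
  (∀ τ s t : ℝ, 0 ≤ s → 0 ≤ t → S (s + t) τ = S t (τ + s) ∘ S s τ) ∧
  (∀ t τ : ℝ, 0 ≤ t → Continuous (S t τ))

/-- A neighborhood-closed collection of families of nonempty subsets of `Y`. -/
def NbhdClosed {Y : Type*} [MetricSpace Y] (𝔇 : Set (ℝ → Set Y)) : Prop :=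
  (∀ D ∈ 𝔇, ∀ τ : ℝ, (D τ).Nonempty) ∧
  (∀ D ∈ 𝔇, ∃ ε > (0:ℝ), ∀ B : ℝ → Set Y,
    (∀ τ : ℝ, (B τ).Nonempty ∧ B τ ⊆ {y : Y | Metric.infDist y (D τ) < ε}) → B ∈ 𝔇)

/-- `K` is a closed `𝔇`-pullback absorbing set for `S`. -/
def IsClosedAbsorbing {Y : Type*} [MetricSpace Y] (S : ℝ → ℝ → Y → Y)
    (𝔇 : Set (ℝ → Set Y)) (K : ℝ → Set Y) : Prop :=
  K ∈ 𝔇 ∧ (∀ τ : ℝ, IsClosed (K τ)) ∧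
  (∀ τ : ℝ, ∀ D ∈ 𝔇, ∃ T > (0:ℝ), ∀ t ≥ T, S t (τ - t) '' D (τ - t) ⊆ K τ)

/-- `S` is `𝔇`-pullback asymptotically compact. -/
def PullbackAsympCompact {Y : Type*} [MetricSpace Y] (S : ℝ → ℝ → Y → Y)
    (𝔇 : Set (ℝ → Set Y)) : Prop :=
  ∀ τ : ℝ, ∀ D ∈ 𝔇, ∀ t : ℕ → ℝ, ∀ x : ℕ → Y,
    Tendsto t atTop atTop → (∀ n, x n ∈ D (τ - t n)) →
    ∃ (y : Y) (φ : ℕ → ℕ), StrictMono φ ∧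
      Tendsto (fun n => S (t (φ n)) (τ - t (φ n)) (x (φ n))) atTop (𝓝 y)

/-- `A` is a `𝔇`-pullback attractor for `S`: it belongs to `𝔇`, has compact sections,
is invariant, and pullback attracts every member of `𝔇` (Hausdorff semidistance → 0). -/
def IsPullbackAttractor {Y : Type*} [MetricSpace Y] (S : ℝ → ℝ → Y → Y)
    (𝔇 : Set (ℝ → Set Y)) (A : ℝ → Set Y) : Prop :=
  A ∈ 𝔇 ∧ (∀ τ : ℝ, IsCompact (A τ)) ∧
  (∀ t : ℝ, 0 ≤ t → ∀ τ : ℝ, S t τ '' A τ = A (τ + t)) ∧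
  (∀ D ∈ 𝔇, ∀ τ : ℝ, ∀ ε > (0:ℝ), ∃ T : ℝ, ∀ t ≥ T, ∀ x ∈ D (τ - t),
    Metric.infDist (S t (τ - t) x) (A τ) < ε)

/-!
The ω-limit family ω(K, τ) is the attractor. Asymptotic compactness turns every sequence of
pullback trajectory points into a convergent one, which makes ω(K, τ) nonempty and compact; it
lies in the closed set K(τ) because K absorbs itself, so it belongs to 𝔇 by
neighbourhood-closedness. Invariance comes from the cocycle identity and continuity of S(t, τ),
asymptotic compactness again supplying preimages. Attraction holds by contradiction: badly
attracted points have a convergent subsequence whose limit lies in ω(K, τ), since K absorbs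
every D ∈ 𝔇. Finally an invariant family is its own pullback image, so a pullback attractor A
is attracted by any other one A', and A(τ) ⊆ A'(τ) because A'(τ) is closed.
-/

open Metric Set

section PullbackOmegaLimit

variable {Y : Type*} [MetricSpace Y] {S : ℝ → ℝ → Y → Y} {𝔇 : Set (ℝ → Set Y)}
  {K D : ℝ → Set Y} {τ : ℝ}

theorem IsNDS.apply_eq_apply_apply (hS : IsNDS S) {r t : ℝ} (hr : 0 ≤ r) (hrt : r ≤ t)
    (τ : ℝ) (x : Y) : S t (τ - t) x = S r (τ - r) (S (t - r) (τ - t) x) := by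
  have h := congrFun (hS.2.1 (τ - t) (t - r) r (sub_nonneg.2 hrt) hr) x
  rwa [sub_add_cancel, show τ - t + (t - r) = τ - r by ring] at h

theorem NbhdClosed.mem_of_subset (h𝔇 : NbhdClosed 𝔇) {B : ℝ → Set Y} (hD : D ∈ 𝔇)
    (hB : ∀ τ, (B τ).Nonempty) (hBD : ∀ τ, B τ ⊆ D τ) : B ∈ 𝔇 := by
  obtain ⟨ε, hε, hnbhd⟩ := h𝔇.2 D hD
  refine hnbhd B fun τ => ⟨hB τ, fun y hy => ?_⟩
  show infDist y (D τ) < ε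
  rwa [infDist_zero_of_mem (hBD τ hy)]

def PullbackAbsorbs (S : ℝ → ℝ → Y → Y) (K D : ℝ → Set Y) : Prop :=
  ∀ τ, ∃ T, ∀ t ≥ T, S t (τ - t) '' D (τ - t) ⊆ K τ

theorem IsClosedAbsorbing.pullbackAbsorbs (hK : IsClosedAbsorbing S 𝔇 K) (hD : D ∈ 𝔇) :
    PullbackAbsorbs S K D :=
  fun τ => (hK.2.2 τ D hD).imp fun _ hT => hT.2

def pullbackOmegaLimit (S : ℝ → ℝ → Y → Y) (K : ℝ → Set Y) (τ : ℝ) : Set Y :=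
  ⋂ s ∈ Ici (0:ℝ), closure (⋃ t ∈ Ici s, S t (τ - t) '' K (τ - t))

theorem isClosed_pullbackOmegaLimit : IsClosed (pullbackOmegaLimit S K τ) :=
  isClosed_biInter fun _ _ => isClosed_closure

theorem mem_pullbackOmegaLimit_of_tendsto {t : ℕ → ℝ} {x : ℕ → Y} {y : Y}
    (ht : Tendsto t atTop atTop) (hx : ∀ n, x n ∈ K (τ - t n))
    (hy : Tendsto (fun n => S (t n) (τ - t n) (x n)) atTop (𝓝 y)) :
    y ∈ pullbackOmegaLimit S K τ :=
  mem_iInter₂.2 fun s _ => mem_closure_of_tendsto hy <|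
    (ht.eventually_ge_atTop s).mono fun n hn => mem_biUnion hn ⟨x n, hx n, rfl⟩

theorem mem_pullbackOmegaLimit_of_tendsto_of_absorbs (hS : IsNDS S)
    (habs : PullbackAbsorbs S K D) {t : ℕ → ℝ} {x : ℕ → Y} {y : Y}
    (ht : Tendsto t atTop atTop) (hx : ∀ n, x n ∈ D (τ - t n))
    (hy : Tendsto (fun n => S (t n) (τ - t n) (x n)) atTop (𝓝 y)) :
    y ∈ pullbackOmegaLimit S K τ := by
  refine mem_iInter₂.2 fun s (hs : 0 ≤ s) => mem_closure_of_tendsto hy ?_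
  -- absorption at the fixed time `τ - s` puts the trajectory in `K (τ - s)` after time `t n - s`
  obtain ⟨T, hT⟩ := habs (τ - s)
  filter_upwards [ht.eventually_ge_atTop (s + max T 0)] with n hn
  have hsn : s ≤ t n := by linarith [le_max_right T 0]
  have hτ : τ - s - (t n - s) = τ - t n := by ring
  have hK : S (t n - s) (τ - t n) (x n) ∈ K (τ - s) :=
    hT (t n - s) (by linarith [le_max_left T 0]) ⟨x n, hτ ▸ hx n, by rw [hτ]⟩
  rw [hS.apply_eq_apply_apply hs hsn]
  exact mem_biUnion self_mem_Ici ⟨_, hK, rfl⟩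

theorem pullbackOmegaLimit_subset (hKcl : IsClosed (K τ)) (habs : PullbackAbsorbs S K K) :
    pullbackOmegaLimit S K τ ⊆ K τ := by
  obtain ⟨T, hT⟩ := habs τ
  refine (biInter_subset_of_mem (le_max_right T 0 : (0:ℝ) ≤ max T 0)).trans ?_
  exact closure_minimal (iUnion₂_subset fun t ht => hT t (le_of_max_le_left ht)) hKcl

theorem exists_seq_tendsto_dist_of_mem_pullbackOmegaLimit {u : ℕ → Y}
    (hu : ∀ n, u n ∈ pullbackOmegaLimit S K τ) {s : ℝ} (hs : 0 ≤ s) :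
    ∃ (t : ℕ → ℝ) (x : ℕ → Y), (∀ n, s ≤ t n) ∧ Tendsto t atTop atTop ∧
      (∀ n, x n ∈ K (τ - t n)) ∧
      Tendsto (fun n => dist (S (t n) (τ - t n) (x n)) (u n)) atTop (𝓝 0) := by
  have hclose : ∀ n : ℕ, ∃ t ≥ s + n, ∃ x ∈ K (τ - t),
      dist (S t (τ - t) x) (u n) < 1 / (n + 1) := by
    intro n
    have hsn : (0:ℝ) ≤ s + n := by positivity
    obtain ⟨_, hmem, hdist⟩ :=
      Metric.mem_closure_iff.1 (mem_iInter₂.1 (hu n) (s + n) hsn) (1 / (n + 1)) (by positivity)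
    obtain ⟨t, ht, x, hx, rfl⟩ := mem_iUnion₂.1 hmem
    exact ⟨t, ht, x, hx, by rwa [dist_comm]⟩
  choose t ht x hx hdist using hclose
  refine ⟨t, x, fun n => (le_add_of_nonneg_right n.cast_nonneg).trans (ht n), ?_, hx, ?_⟩
  · exact tendsto_atTop_mono (fun n => (le_add_of_nonneg_left hs).trans (ht n))
      tendsto_natCast_atTop_atTop
  · exact squeeze_zero (fun _ => dist_nonneg) (fun n => (hdist n).le)
      tendsto_one_div_add_atTop_nhds_zero_nat

theorem exists_seq_tendsto_of_mem_pullbackOmegaLimit {y : Y}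
    (hy : y ∈ pullbackOmegaLimit S K τ) {s : ℝ} (hs : 0 ≤ s) :
    ∃ (t : ℕ → ℝ) (x : ℕ → Y), (∀ n, s ≤ t n) ∧ Tendsto t atTop atTop ∧
      (∀ n, x n ∈ K (τ - t n)) ∧ Tendsto (fun n => S (t n) (τ - t n) (x n)) atTop (𝓝 y) := by
  obtain ⟨t, x, hst, ht, hx, hdist⟩ :=
    exists_seq_tendsto_dist_of_mem_pullbackOmegaLimit (fun _ => hy) hs
  exact ⟨t, x, hst, ht, hx, tendsto_iff_dist_tendsto_zero.2 hdist⟩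

theorem pullbackOmegaLimit_nonempty (h𝔇 : NbhdClosed 𝔇) (hKD : K ∈ 𝔇)
    (hAC : PullbackAsympCompact S 𝔇) (τ : ℝ) :
    (pullbackOmegaLimit S K τ).Nonempty := by
  choose x hx using fun n : ℕ => h𝔇.1 K hKD (τ - n)
  obtain ⟨y, φ, hφ, hy⟩ := hAC τ K hKD _ x tendsto_natCast_atTop_atTop hx
  exact ⟨y, mem_pullbackOmegaLimit_of_tendsto
    (tendsto_natCast_atTop_atTop.comp hφ.tendsto_atTop) (fun n => hx (φ n)) hy⟩

theorem isCompact_pullbackOmegaLimit (hKD : K ∈ 𝔇) (hAC : PullbackAsympCompact S 𝔇) (τ : ℝ) :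
    IsCompact (pullbackOmegaLimit S K τ) := by
  refine IsSeqCompact.isCompact fun u hu => ?_
  obtain ⟨t, x, -, ht, hx, hdist⟩ := exists_seq_tendsto_dist_of_mem_pullbackOmegaLimit hu le_rfl
  obtain ⟨y, φ, hφ, hy⟩ := hAC τ K hKD t x ht hx
  have hu' : Tendsto (u ∘ φ) atTop (𝓝 y) := hy.congr_dist (hdist.comp hφ.tendsto_atTop)
  exact ⟨y, isClosed_pullbackOmegaLimit.mem_of_tendsto hu' (Eventually.of_forall fun n => hu _),
    φ, hφ, hu'⟩

theorem image_pullbackOmegaLimit_subset (hS : IsNDS S) {t : ℝ} (ht : 0 ≤ t) (τ : ℝ) :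
    S t τ '' pullbackOmegaLimit S K τ ⊆ pullbackOmegaLimit S K (τ + t) := by
  rintro _ ⟨y, hy, rfl⟩
  obtain ⟨u, x, hu0, hu, hx, hxy⟩ := exists_seq_tendsto_of_mem_pullbackOmegaLimit hy le_rfl
  have hshift : ∀ n, S (u n + t) (τ + t - (u n + t)) (x n) = S t τ (S (u n) (τ - u n) (x n)) := by
    intro n
    rw [hS.apply_eq_apply_apply ht (le_add_of_nonneg_left (hu0 n)), add_sub_cancel_right,
      add_sub_cancel_right, add_sub_add_right_eq_sub]
  refine mem_pullbackOmegaLimit_of_tendsto (x := x) (tendsto_atTop_add_const_right _ t hu)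
    (fun n => ?_) ?_
  · rw [add_sub_add_right_eq_sub]
    exact hx n
  · simp only [hshift]
    exact ((hS.2.2 t τ ht).tendsto y).comp hxy

theorem pullbackOmegaLimit_subset_image (hS : IsNDS S) (hKD : K ∈ 𝔇)
    (hAC : PullbackAsympCompact S 𝔇) {t : ℝ} (ht : 0 ≤ t) (τ : ℝ) :
    pullbackOmegaLimit S K (τ + t) ⊆ S t τ '' pullbackOmegaLimit S K τ := by
  intro y hy
  obtain ⟨u, x, htu, hu, hx, hxy⟩ := exists_seq_tendsto_of_mem_pullbackOmegaLimit hy ht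
  have hx' : ∀ n, x n ∈ K (τ - (u n - t)) := fun n => by
    rw [sub_sub_eq_add_sub]
    exact hx n
  have hv : Tendsto (fun n => u n - t) atTop atTop := by
    simpa only [sub_eq_add_neg] using tendsto_atTop_add_const_right _ (-t) hu
  obtain ⟨z, φ, hφ, hz⟩ := hAC τ K hKD _ x hv hx'
  refine ⟨z, mem_pullbackOmegaLimit_of_tendsto (hv.comp hφ.tendsto_atTop)
    (fun n => hx' (φ n)) hz, ?_⟩
  have hsplit : ∀ n, S (u n) (τ + t - u n) (x n) = S t τ (S (u n - t) (τ - (u n - t)) (x n)) := by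
    intro n
    rw [hS.apply_eq_apply_apply ht (htu n), add_sub_cancel_right, sub_sub_eq_add_sub]
  refine tendsto_nhds_unique (((hS.2.2 t τ ht).tendsto z).comp hz) ?_
  simpa only [Function.comp_def, hsplit] using hxy.comp hφ.tendsto_atTop

theorem pullbackOmegaLimit_attracts (hS : IsNDS S) (hAC : PullbackAsympCompact S 𝔇)
    (hD : D ∈ 𝔇) (habs : PullbackAbsorbs S K D) (τ : ℝ) {ε : ℝ} (hε : 0 < ε) :
    ∃ T : ℝ, ∀ t ≥ T, ∀ x ∈ D (τ - t),
      infDist (S t (τ - t) x) (pullbackOmegaLimit S K τ) < ε := by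
  by_contra! hfar
  choose t ht x hx hεx using fun n : ℕ => hfar n
  have htop : Tendsto t atTop atTop := tendsto_atTop_mono ht tendsto_natCast_atTop_atTop
  obtain ⟨y, φ, hφ, hy⟩ := hAC τ D hD t x htop hx
  have hyω := mem_pullbackOmegaLimit_of_tendsto_of_absorbs hS habs
    (htop.comp hφ.tendsto_atTop) (fun n => hx (φ n)) hy
  have hlim := ((continuous_infDist_pt (pullbackOmegaLimit S K τ)).tendsto y).comp hy
  rw [infDist_zero_of_mem hyω] at hlim
  exact hε.not_ge (ge_of_tendsto' hlim fun n => hεx (φ n))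

theorem IsPullbackAttractor.subset {A A' : ℝ → Set Y} (hA : IsPullbackAttractor S 𝔇 A)
    (hA' : IsPullbackAttractor S 𝔇 A') (hne : (A' τ).Nonempty) : A τ ⊆ A' τ := by
  intro y hy
  refine ((hA'.2.1 τ).isClosed.mem_iff_infDist_zero hne).2
    (le_antisymm (le_of_forall_pos_lt_add fun ε hε => ?_) infDist_nonneg)
  obtain ⟨T, hT⟩ := hA'.2.2.2 A hA.1 τ ε hε
  obtain ⟨n, hn⟩ := exists_nat_ge T
  have hinv := hA.2.2.1 n n.cast_nonneg (τ - n)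
  rw [sub_add_cancel] at hinv
  obtain ⟨x, hx, rfl⟩ := hinv ▸ hy
  simpa using hT n hn x hx

end PullbackOmegaLimit

theorem exists_unique_pullback_attractor_general {Y : Type*} [MetricSpace Y]
    (S : ℝ → ℝ → Y → Y) (𝔇 : Set (ℝ → Set Y))
    (hS : IsNDS S) (h𝔇 : NbhdClosed 𝔇) (K : ℝ → Set Y)
    (hK : IsClosedAbsorbing S 𝔇 K) (hAC : PullbackAsympCompact S 𝔇) :
    (∃! A : ℝ → Set Y, IsPullbackAttractor S 𝔇 A) ∧
    IsPullbackAttractor S 𝔇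
      (fun τ => ⋂ s ∈ Set.Ici (0:ℝ),
        closure (⋃ t ∈ Set.Ici s, S t (τ - t) '' K (τ - t))) := by
  have hKD : K ∈ 𝔇 := hK.1
  have hω : IsPullbackAttractor S 𝔇 (pullbackOmegaLimit S K) :=
    ⟨h𝔇.mem_of_subset hKD (pullbackOmegaLimit_nonempty h𝔇 hKD hAC)
        fun τ => pullbackOmegaLimit_subset (hK.2.1 τ) (hK.pullbackAbsorbs hKD),
      isCompact_pullbackOmegaLimit hKD hAC,
      fun t ht τ => (image_pullbackOmegaLimit_subset hS ht τ).antisymm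
        (pullbackOmegaLimit_subset_image hS hKD hAC ht τ),
      fun D hD τ ε hε => pullbackOmegaLimit_attracts hS hAC hD (hK.pullbackAbsorbs hD) τ hε⟩
  refine ⟨⟨_, hω, fun A hA => funext fun τ => (hA.subset hω ?_).antisymm (hω.subset hA ?_)⟩, hω⟩
  · exact pullbackOmegaLimit_nonempty h𝔇 hKD hAC τ
  · exact h𝔇.1 A hA.1 τ

/-- If a continuous NDS `S` on a complete metric space, with a neighborhood-closed collection
`𝔇`, has a closed `𝔇`-pullback absorbing set `K ∈ 𝔇` and is `𝔇`-pullback asymptotically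
compact, then it has a unique `𝔇`-pullback attractor, given by the ω-limit sets of `K`. -/
theorem exists_unique_pullback_attractor {Y : Type*} [MetricSpace Y] [CompleteSpace Y]
    (S : ℝ → ℝ → Y → Y) (𝔇 : Set (ℝ → Set Y))
    (hS : IsNDS S) (h𝔇 : NbhdClosed 𝔇) (K : ℝ → Set Y)
    (hK : IsClosedAbsorbing S 𝔇 K) (hAC : PullbackAsympCompact S 𝔇) :
    (∃! A : ℝ → Set Y, IsPullbackAttractor S 𝔇 A) ∧
    IsPullbackAttractor S 𝔇
      (fun τ => ⋂ s ∈ Set.Ici (0:ℝ),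
        closure (⋃ t ∈ Set.Ici s, S t (τ - t) '' K (τ - t))) :=
  exists_unique_pullback_attractor_general S 𝔇 hS h𝔇 K hK hAC
end

section
/- Let (Y,d) be a complete metric space, 𝔇 a neighborhood-closed collection of families of nonempty subsets of Y, and S a continuous non-autonomous dynamical system on Y having a closed 𝔇-pullback absorbing set K ∈ 𝔇 and being 𝔇-pullback asymptotically compact, so that S has a unique 𝔇-pullback attractor A ∈ 𝔇. If, in addition, there is T > 0 such that S is T-periodic, i.e. S(t, τ+T) = S(t,τ) for all t ≥ 0 and τ ∈ ℝ, and K is T-periodic, i.e. K(τ+T) = K(τ) for all τ ∈ ℝ, then the attractor is T-periodic: A(τ+T) = A(τ) for all τ ∈ ℝ. -/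
/-!
If `S` and `K` are `T`-periodic, the shifted families `τ ↦ A (τ ± T)` are again invariant under
`S`, and they lie in `𝔇` because they sit inside the periodic absorbing set `K`, which belongs to
the neighborhood-closed universe `𝔇`. An invariant member of `𝔇` is pullback attracted by `A`,
so its sections lie in the closed sections of `A`; this gives `A (τ + T) ⊆ A τ` and
`A (τ - T) ⊆ A τ`.
-/

open Filter Topology

open Metric

section

variable {Y : Type*} {S : ℝ → ℝ → Y → Y} {A B K : ℝ → Set Y}

def IsInvariantFamily (S : ℝ → ℝ → Y → Y) (A : ℝ → Set Y) : Prop :=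
  ∀ t : ℝ, 0 ≤ t → ∀ τ : ℝ, S t τ '' A τ = A (τ + t)

theorem IsInvariantFamily.image_pullback (hA : IsInvariantFamily S A) {t : ℝ} (ht : 0 ≤ t)
    (τ : ℝ) : S t (τ - t) '' A (τ - t) = A τ := by
  rw [hA t ht, sub_add_cancel]

theorem IsInvariantFamily.comp_add_const (hA : IsInvariantFamily S A) {c : ℝ}
    (hSc : ∀ t : ℝ, 0 ≤ t → Function.Periodic (S t) c) :
    IsInvariantFamily S (fun τ => A (τ + c)) := by
  intro t ht τ
  rw [← hSc t ht τ, hA t ht, add_right_comm]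

variable [MetricSpace Y] {𝔇 : Set (ℝ → Set Y)}

theorem IsInvariantFamily.subset_of_isClosedAbsorbing (hA : IsInvariantFamily S A)
    (hA𝔇 : A ∈ 𝔇) (hK : IsClosedAbsorbing S 𝔇 K) (τ : ℝ) : A τ ⊆ K τ := by
  obtain ⟨T₀, hT₀, habs⟩ := hK.2.2 τ A hA𝔇
  rw [← hA.image_pullback hT₀.le]
  exact habs T₀ le_rfl

theorem NbhdClosed.mem_of_subset_s1 (h𝔇 : NbhdClosed 𝔇) (hK : K ∈ 𝔇)
    (hB : ∀ τ, (B τ).Nonempty) (hBK : ∀ τ, B τ ⊆ K τ) : B ∈ 𝔇 := by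
  obtain ⟨ε, hε, hnbhd⟩ := h𝔇.2 K hK
  refine hnbhd B fun τ => ⟨hB τ, fun y hy => ?_⟩
  simpa [infDist_zero_of_mem (hBK τ hy)] using hε

theorem IsPullbackAttractor.subset_of_isInvariantFamily (hA : IsPullbackAttractor S 𝔇 A)
    (hB : IsInvariantFamily S B) (hB𝔇 : B ∈ 𝔇) {τ : ℝ} (hAne : (A τ).Nonempty) :
    B τ ⊆ A τ := by
  intro y hy
  rw [(hA.2.1 τ).isClosed.mem_iff_infDist_zero hAne]
  by_contra hy0
  obtain ⟨T₀, hT₀⟩ := hA.2.2.2 B hB𝔇 τ _ (infDist_nonneg.lt_of_ne' hy0)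
  rw [← hB.image_pullback (le_max_right T₀ 0)] at hy
  obtain ⟨x, hx, rfl⟩ := hy
  exact lt_irrefl _ (hT₀ _ (le_max_left _ _) x hx)

theorem IsPullbackAttractor.comp_add_subset_of_periodic (hA : IsPullbackAttractor S 𝔇 A)
    (h𝔇 : NbhdClosed 𝔇) (hK : IsClosedAbsorbing S 𝔇 K) {c : ℝ}
    (hSc : ∀ t : ℝ, 0 ≤ t → Function.Periodic (S t) c) (hKc : Function.Periodic K c)
    (τ : ℝ) : A (τ + c) ⊆ A τ := by
  have hinv : IsInvariantFamily S A := hA.2.2.1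
  have hAne : ∀ σ, (A σ).Nonempty := h𝔇.1 A hA.1
  have hshift𝔇 : (fun σ => A (σ + c)) ∈ 𝔇 :=
    h𝔇.mem_of_subset_s1 hK.1 (fun σ => hAne _) fun σ =>
      hKc σ ▸ hinv.subset_of_isClosedAbsorbing hA.1 hK (σ + c)
  exact hA.subset_of_isInvariantFamily (hinv.comp_add_const hSc) hshift𝔇 (hAne τ)

end

theorem pullback_attractor_periodic_general {Y : Type*} [MetricSpace Y]
    (S : ℝ → ℝ → Y → Y) (𝔇 : Set (ℝ → Set Y))
    (h𝔇 : NbhdClosed 𝔇) (K : ℝ → Set Y)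
    (hK : IsClosedAbsorbing S 𝔇 K)
    (T : ℝ)
    (hSper : ∀ t : ℝ, 0 ≤ t → ∀ τ : ℝ, S t (τ + T) = S t τ)
    (hKper : ∀ τ : ℝ, K (τ + T) = K τ) :
    ∀ A : ℝ → Set Y, IsPullbackAttractor S 𝔇 A → ∀ τ : ℝ, A (τ + T) = A τ := by
  intro A hA τ
  have hSper' : ∀ t : ℝ, 0 ≤ t → Function.Periodic (S t) (-T) :=
    fun t ht => Function.Periodic.neg (hSper t ht)
  refine (hA.comp_add_subset_of_periodic h𝔇 hK hSper hKper τ).antisymm ?_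
  simpa using hA.comp_add_subset_of_periodic h𝔇 hK hSper' (Function.Periodic.neg hKper) (τ + T)

/-- If in addition both the NDS `S` and the closed absorbing set `K` are `T`-periodic,
then every `𝔇`-pullback attractor (in particular, the unique one) is `T`-periodic. -/
theorem pullback_attractor_periodic {Y : Type*} [MetricSpace Y] [CompleteSpace Y]
    (S : ℝ → ℝ → Y → Y) (𝔇 : Set (ℝ → Set Y))
    (hS : IsNDS S) (h𝔇 : NbhdClosed 𝔇) (K : ℝ → Set Y)
    (hK : IsClosedAbsorbing S 𝔇 K) (hAC : PullbackAsympCompact S 𝔇)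
    (T : ℝ) (hT : 0 < T)
    (hSper : ∀ t : ℝ, 0 ≤ t → ∀ τ : ℝ, S t (τ + T) = S t τ)
    (hKper : ∀ τ : ℝ, K (τ + T) = K τ) :
    ∀ A : ℝ → Set Y, IsPullbackAttractor S 𝔇 A → ∀ τ : ℝ, A (τ + T) = A τ :=
  pullback_attractor_periodic_general S 𝔇 h𝔇 K hK T hSper hKper
end

section
/- Let f : ℝ → ℝ be continuously differentiable on [0,1], and let f̄ = ∫₀¹ f(t) dt denote its average over [0,1]. Then ∫₀¹ (f(x) − f̄)² dx ≤ ∫₀¹ (f′(t))² dt. -/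
/-!
By the fundamental theorem of calculus, `|f x - f y| ≤ A := ∫₀¹ |f'|` for all `x, y ∈ [0,1]`;
averaging over `y` gives `|f x - f̄| ≤ A`, hence `∫₀¹ (f - f̄)² ≤ A²`, and `A² ≤ ∫₀¹ f'²` because
the variance of `|f'|` with respect to the uniform probability measure on `[0,1]` is nonnegative.
This crude sup-norm bound suffices because the constant `1` is far from the sharp `1/π²`.
-/

open MeasureTheory Set intervalIntegral

lemma sq_integral_le_integral_sq {Ω : Type*} [MeasurableSpace Ω] {μ : Measure Ω}
    [IsProbabilityMeasure μ] {X : Ω → ℝ} (hX : MemLp X 2 μ) :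
    (∫ ω, X ω ∂μ) ^ 2 ≤ ∫ ω, X ω ^ 2 ∂μ := by
  have h := ProbabilityTheory.variance_nonneg X μ
  rw [ProbabilityTheory.variance_eq_sub hX] at h
  simpa [sub_nonneg] using h

lemma sq_intervalIntegral_zero_one_le {g : ℝ → ℝ} (hg : ContinuousOn g (Icc 0 1)) :
    (∫ x in (0:ℝ)..1, g x) ^ 2 ≤ ∫ x in (0:ℝ)..1, g x ^ 2 := by
  have : IsProbabilityMeasure (volume.restrict (Ioc (0:ℝ) 1)) := ⟨by simp⟩
  have hgAE := (hg.mono Ioc_subset_Icc_self).aestronglyMeasurable measurableSet_Ioc (μ := volume)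
  simp only [integral_of_le zero_le_one]
  exact sq_integral_le_integral_sq <| (memLp_two_iff_integrable_sq hgAE).2
    ((hg.pow 2).integrableOn_Icc.mono_set Ioc_subset_Icc_self)

lemma abs_intervalIntegral_zero_one_le {g : ℝ → ℝ} {C : ℝ}
    (h : ∀ x ∈ Icc (0:ℝ) 1, |g x| ≤ C) : |∫ x in (0:ℝ)..1, g x| ≤ C := by
  simpa using norm_integral_le_of_norm_le_const (a := 0) (b := 1) (f := g) fun x hx =>
    Real.norm_eq_abs (g x) ▸ h x (Ioc_subset_Icc_self (by rwa [uIoc_of_le zero_le_one] at hx))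

lemma abs_sub_le_integral_abs_of_hasDerivWithinAt {f f' : ℝ → ℝ} {a b x y : ℝ}
    (hderiv : ∀ t ∈ Icc a b, HasDerivWithinAt f (f' t) (Icc a b) t)
    (hint : IntervalIntegrable f' volume a b) (hx : x ∈ Icc a b) (hy : y ∈ Icc a b) :
    |f x - f y| ≤ ∫ t in a..b, |f' t| := by
  wlog hyx : y ≤ x generalizing x y
  · rw [abs_sub_comm]; exact this hy hx (le_of_not_ge hyx)
  have hsub : Icc y x ⊆ Icc a b := Icc_subset_Icc hy.1 hx.2
  have hftc : ∫ t in y..x, f' t = f x - f y :=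
    integral_eq_sub_of_hasDerivAt_of_le hyx
      (fun t ht => (hderiv t (hsub ht)).continuousWithinAt.mono hsub)
      (fun t ht => (hderiv t (hsub (Ioo_subset_Icc_self ht))).hasDerivAt
        (Icc_mem_nhds (hy.1.trans_lt ht.1) (ht.2.trans_le hx.2)))
      (hint.mono_set (uIcc_subset_uIcc (Icc_subset_uIcc hy) (Icc_subset_uIcc hx)))
  rw [← hftc]
  calc |∫ t in y..x, f' t| ≤ ∫ t in y..x, |f' t| := abs_integral_le_integral_abs hyx
    _ ≤ ∫ t in a..b, |f' t| :=
      integral_mono_interval hy.1 hyx hx.2 (ae_of_all _ fun _ => abs_nonneg _) hint.abs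

lemma abs_sub_intervalIntegral_zero_one_le {f : ℝ → ℝ} {c A : ℝ}
    (hf : IntervalIntegrable f volume 0 1) (h : ∀ y ∈ Icc (0:ℝ) 1, |c - f y| ≤ A) :
    |c - ∫ y in (0:ℝ)..1, f y| ≤ A := by
  have hmean : c - ∫ y in (0:ℝ)..1, f y = ∫ y in (0:ℝ)..1, (c - f y) := by
    simp [integral_sub intervalIntegrable_const hf]
  rw [hmean]
  exact abs_intervalIntegral_zero_one_le h

/-- One-dimensional Poincaré–Wirtinger inequality on `[0,1]`:
`∫₀¹ (f(x) − f̄)² dx ≤ ∫₀¹ (f′(t))² dt`, where `f̄ = ∫₀¹ f`. -/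
theorem poincare_wirtinger_unit_interval
    (f f' : ℝ → ℝ)
    (hderiv : ∀ t ∈ Set.Icc (0:ℝ) 1, HasDerivWithinAt f (f' t) (Set.Icc (0:ℝ) 1) t)
    (hcont : ContinuousOn f' (Set.Icc (0:ℝ) 1)) :
    ∫ x in (0:ℝ)..1, (f x - ∫ t in (0:ℝ)..1, f t) ^ 2 ≤
      ∫ t in (0:ℝ)..1, (f' t) ^ 2 := by
  set A := ∫ t in (0:ℝ)..1, |f' t|
  have hA : A ^ 2 ≤ ∫ t in (0:ℝ)..1, f' t ^ 2 := by
    simpa only [sq_abs] using sq_intervalIntegral_zero_one_le hcont.abs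
  have hf'I : IntervalIntegrable f' volume 0 1 := hcont.intervalIntegrable_of_Icc zero_le_one
  have hfI : IntervalIntegrable f volume 0 1 :=
    (HasDerivWithinAt.continuousOn hderiv).intervalIntegrable_of_Icc zero_le_one
  have hdev : ∀ x ∈ Icc (0:ℝ) 1, |(f x - ∫ t in (0:ℝ)..1, f t) ^ 2| ≤ A ^ 2 := fun x hx => by
    rw [abs_pow]
    refine pow_le_pow_left₀ (abs_nonneg _) ?_ 2
    exact abs_sub_intervalIntegral_zero_one_le hfI fun y hy =>
      abs_sub_le_integral_abs_of_hasDerivWithinAt hderiv hf'I hx hy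
  calc ∫ x in (0:ℝ)..1, (f x - ∫ t in (0:ℝ)..1, f t) ^ 2 ≤ A ^ 2 :=
        (le_abs_self _).trans (abs_intervalIntegral_zero_one_le hdev)
    _ ≤ _ := hA
end
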